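/- Ackermann normal forms compare lexicographically: if F_{b_{k-1}}^{1+n_{k-1}} ∘ ... ∘ F_{b_0}^{1+n_0}(1) and F_{b'_{l-1}}^{1+n'_{l-1}} ∘ ... ∘ F_{b'_0}^{1+n'_0}(1) are both in Ackermann normal form, then the first number is strictly less than the second if and only if the sequence ⟨(b_0,n_0),...,(b_{k-1},n_{k-1})⟩ is lexicographically less than ⟨(b'_0,n'_0),...,(b'_{l-1},n'_{l-1})⟩, where pairs are compared in the product (lexicographic) order on ℕ × ℕ, and a proper initial segment is considered smaller than its extension. -/

import Mathlib

/-!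
Every `F b` is inflationary and `F` is monotone in `b`. The key estimate: if a normal form `t`
applied to an input `m` uses only indices below `b`, then `t(m) < F_b(m)`. Indeed its innermost
block `F_c^{1+n}` has `c < b` and `n < m`, and the rest uses indices below `c`, so by induction
`t(m) < F_c(F_c^{1+n}(m)) ≤ F_c^{1+m}(m) = F_{c+1}(m) ≤ F_b(m)`. Hence at the first position
where two normal forms differ, the one with the larger pair `(b', n')` already exceeds
everything the other can still produce, so evaluation is strictly monotone for the
lexicographic order, and trichotomy of that order gives the converse.
-/

/-- The fast-growing hierarchy: `F 0 n = n + 1` and `F (b+1) n = (F b)^[1+n] n`. -/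
def F : ℕ → ℕ → ℕ
  | 0, n => n + 1
  | b + 1, n => (F b)^[1 + n] n

/-- `evalANF [(b₀,n₀),…,(b_{k-1},n_{k-1})] = F_{b_{k-1}}^[1+n_{k-1}] ∘ ⋯ ∘ F_{b₀}^[1+n₀] (1)`:
the list records the innermost pair first. -/
def evalANF (l : List (ℕ × ℕ)) : ℕ :=
  l.foldl (fun m p => (F p.1)^[1 + p.2] m) 1

/-- `l` is an Ackermann normal form: the indices `b_{k-1} < ⋯ < b₀` are strictly decreasing
along the list (which starts with the innermost pair `(b₀,n₀)`), and each exponent `n_i`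
is smaller than the value of the composition of the earlier (inner) pairs applied to `1`. -/
def IsANF (l : List (ℕ × ℕ)) : Prop :=
  l.Chain' (fun p q => q.1 < p.1) ∧
  ∀ i (h : i < l.length), (l.get ⟨i, h⟩).2 < evalANF (l.take i)

theorem F_succ (b n : ℕ) : F (b + 1) n = (F b)^[1 + n] n := rfl

theorem lt_F (b n : ℕ) : n < F b n := by
  induction b generalizing n with
  | zero => exact Nat.lt_succ_self n
  | succ b ih =>
    calc n < F b n := ih n
      _ ≤ (F b)^[n] (F b n) := Function.id_le_iterate_of_id_le (fun x => (ih x).le) n _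
      _ = F (b + 1) n := by rw [F_succ, Nat.add_comm, Function.iterate_succ_apply]

theorem id_le_F (b : ℕ) : id ≤ F b := fun n => (lt_F b n).le

theorem iterate_F_le_iterate_F (b : ℕ) {j k : ℕ} (h : j ≤ k) (x : ℕ) :
    (F b)^[j] x ≤ (F b)^[k] x :=
  Function.monotone_iterate_of_id_le (id_le_F b) h x

theorem F_le_iterate_F (b : ℕ) {k : ℕ} (hk : 0 < k) (x : ℕ) : F b x ≤ (F b)^[k] x :=
  iterate_F_le_iterate_F b (j := 1) hk x

theorem F_le_F_of_le {b b' : ℕ} (h : b ≤ b') (n : ℕ) : F b n ≤ F b' n :=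
  monotone_nat_of_le_succ (f := fun b => F b n)
    (fun b => (F_le_iterate_F b (by omega) n).trans_eq (F_succ b n).symm) h

theorem F_iterate_F_le_iterate_F (b : ℕ) {n k : ℕ} (h : n < k) (m : ℕ) :
    F b ((F b)^[1 + n] m) ≤ (F b)^[1 + k] m := by
  rw [← Function.iterate_succ_apply' (F b)]
  exact iterate_F_le_iterate_F b (by omega) m

def evalANFFrom (m : ℕ) (l : List (ℕ × ℕ)) : ℕ :=
  l.foldl (fun m p => (F p.1)^[1 + p.2] m) m

theorem le_evalANFFrom (m : ℕ) (l : List (ℕ × ℕ)) : m ≤ evalANFFrom m l := by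
  induction l generalizing m with
  | nil => exact le_rfl
  | cons p t ih => exact (Function.id_le_iterate_of_id_le (id_le_F p.1) _ m).trans (ih _)

def ExponentsBounded : ℕ → List (ℕ × ℕ) → Prop
  | _, [] => True
  | m, (b, n) :: t => n < m ∧ ExponentsBounded ((F b)^[1 + n] m) t

theorem exponentsBounded_iff (m : ℕ) (l : List (ℕ × ℕ)) :
    ExponentsBounded m l ↔
      ∀ i (h : i < l.length), (l.get ⟨i, h⟩).2 < evalANFFrom m (l.take i) := by
  induction l generalizing m with
  | nil => simp [ExponentsBounded]
  | cons p t ih =>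
    obtain ⟨b, n⟩ := p
    rw [ExponentsBounded, ih]
    exact (Nat.forall_lt_succ_left' (p := fun i (h : i < t.length + 1) =>
      (((b, n) :: t).get ⟨i, h⟩).2 < evalANFFrom m (((b, n) :: t).take i))).symm

theorem IsANF.pairwise {l : List (ℕ × ℕ)} (h : IsANF l) :
    l.Pairwise (fun p q => q.1 < p.1) :=
  have : Trans (fun p q : ℕ × ℕ => q.1 < p.1) (fun p q : ℕ × ℕ => q.1 < p.1)
      (fun p q : ℕ × ℕ => q.1 < p.1) :=
    ⟨fun h₁ h₂ => h₂.trans h₁⟩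
  h.1.pairwise

theorem IsANF.exponentsBounded {l : List (ℕ × ℕ)} (h : IsANF l) : ExponentsBounded 1 l :=
  (exponentsBounded_iff 1 l).mpr h.2

theorem evalANFFrom_lt_F {b m : ℕ} {l : List (ℕ × ℕ)}
    (hpw : l.Pairwise (fun p q => q.1 < p.1)) (hb : ∀ p ∈ l, p.1 < b)
    (hexp : ExponentsBounded m l) :
    evalANFFrom m l < F b m := by
  induction l generalizing m b with
  | nil => exact lt_F b m
  | cons p t ih =>
    obtain ⟨c, n⟩ := p
    obtain ⟨hn, hexp⟩ := hexp
    rw [List.pairwise_cons] at hpw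
    calc evalANFFrom m ((c, n) :: t) < F c ((F c)^[1 + n] m) := ih hpw.2 hpw.1 hexp
      _ ≤ (F c)^[1 + m] m := F_iterate_F_le_iterate_F c hn m
      _ = F (c + 1) m := (F_succ c m).symm
      _ ≤ F b m := F_le_F_of_le (hb _ List.mem_cons_self) m

theorem evalANFFrom_lt_of_lex {m : ℕ} {l l' : List (ℕ × ℕ)}
    (hpw : l.Pairwise (fun p q => q.1 < p.1)) (hexp : ExponentsBounded m l)
    (hlex : List.Lex (Prod.Lex (· < ·) (· < ·)) l l') :
    evalANFFrom m l < evalANFFrom m l' := by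
  induction hlex generalizing m with
  | @nil p t =>
    calc m < F p.1 m := lt_F p.1 m
      _ ≤ (F p.1)^[1 + p.2] m := F_le_iterate_F p.1 (by omega) m
      _ ≤ evalANFFrom m (p :: t) := le_evalANFFrom _ t
  | @cons p t t' _ ih =>
    obtain ⟨b, n⟩ := p
    exact ih (List.pairwise_cons.mp hpw).2 hexp.2
  | @rel p t p' t' hp =>
    rw [List.pairwise_cons] at hpw
    refine lt_of_lt_of_le ?_ (le_evalANFFrom _ t')
    cases hp with
    | @left b n b' n' hb =>
      calc evalANFFrom m ((b, n) :: t) < F b' m :=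
            evalANFFrom_lt_F (List.pairwise_cons.mpr hpw)
              (List.forall_mem_cons.mpr ⟨hb, fun q hq => (hpw.1 q hq).trans hb⟩) hexp
        _ ≤ (F b')^[1 + n'] m := F_le_iterate_F b' (by omega) m
    | @right b n n' hn =>
      calc evalANFFrom m ((b, n) :: t) < F b ((F b)^[1 + n] m) :=
            evalANFFrom_lt_F hpw.2 hpw.1 hexp.2
        _ ≤ (F b)^[1 + n'] m := F_iterate_F_le_iterate_F b hn m

theorem IsANF.evalANF_lt_of_lex {l l' : List (ℕ × ℕ)} (h : IsANF l)
    (hlex : List.Lex (Prod.Lex (· < ·) (· < ·)) l l') :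
    evalANF l < evalANF l' :=
  evalANFFrom_lt_of_lex h.pairwise h.exponentsBounded hlex

theorem ackermannNormalForm_lt_iff_lex (l l' : List (ℕ × ℕ))
    (h : IsANF l) (h' : IsANF l') :
    evalANF l < evalANF l' ↔
      List.Lex (Prod.Lex (· < ·) (· < ·)) l l' := by
  refine ⟨fun hlt => ?_, h.evalANF_lt_of_lex⟩
  rcases trichotomous_of (List.Lex (Prod.Lex (· < ·) (· < ·))) l l' with hlex | rfl | hlex
  · exact hlex
  · exact absurd hlt (lt_irrefl _)
  · exact absurd (h'.evalANF_lt_of_lex hlex) hlt.asymm
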